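/- arXiv:2202.13057 — 2 statements merged into one kernel-verified Lean document; each statement's English description precedes it below -/
import Mathlib

section
/- Let Z be a real m×n matrix and let C be any n×n matrix with Z = ZC. Then the nuclear norm of C is at least the rank of Z, i.e. ‖C‖_* ≥ rank(Z). -/
open Matrix

/-- The nuclear norm of a real square matrix: the sum of its singular values,
i.e. the square roots of the eigenvalues of `Cᵀ C = Cᴴ C`. -/
noncomputable def nuclearNorm {n : ℕ} (C : Matrix (Fin n) (Fin n) ℝ) : ℝ :=
  ∑ i, Real.sqrt ((Matrix.isHermitian_conjTranspose_mul_self C).eigenvalues i)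

/-!
Let `K` be the row space of `Z` and `P` the orthogonal projection onto it. Since `Zᴴ = Cᴴ Zᴴ`,
`Cᴴ` fixes `K`, so `P (C x) = P x` for every `x`. For an orthonormal eigenbasis `uᵢ` of `Cᴴ C`
with eigenvalues `λᵢ` this gives `‖P uᵢ‖² = ⟪P uᵢ, P (C uᵢ)⟫ ≤ ‖C uᵢ‖ = √λᵢ`, and summing over `i`
yields `rank Z = dim K = tr P = ∑ ‖P uᵢ‖² ≤ ∑ √λᵢ = ‖C‖_*`.
-/

open Module

namespace Submodule

variable {𝕜 E ι : Type*} [RCLike 𝕜] [NormedAddCommGroup E] [InnerProductSpace 𝕜 E]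
  [FiniteDimensional 𝕜 E] [Fintype ι] (K : Submodule 𝕜 E)

theorem trace_starProjection : LinearMap.trace 𝕜 E K.starProjection = finrank 𝕜 K := by
  have hproj := LinearMap.IsIdempotentElem.isProj_range _ <|
    ContinuousLinearMap.IsIdempotentElem.toLinearMap K.isIdempotentElem_starProjection
  rw [show LinearMap.range (K.starProjection : E →ₗ[𝕜] E) = K from K.range_starProjection]
    at hproj
  exact hproj.trace

theorem sum_norm_sq_starProjection_eq_finrank (b : OrthonormalBasis ι 𝕜 E) :
    ∑ i, ‖K.starProjection (b i)‖ ^ 2 = finrank 𝕜 K := by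
  have htrace := congrArg RCLike.re <|
    (LinearMap.trace_eq_sum_inner (K.starProjection : E →ₗ[𝕜] E) b).symm.trans
      K.trace_starProjection
  simp only [map_sum, RCLike.natCast_re, ContinuousLinearMap.coe_coe] at htrace
  rw [← htrace]
  refine Finset.sum_congr rfl fun i _ => ?_
  rw [inner_re_symm, K.re_inner_starProjection_eq_normSq]
  rfl

theorem finrank_le_sum_norm_of_starProjection_eq (b : OrthonormalBasis ι 𝕜 E) {v : ι → E}
    (hv : ∀ i, K.starProjection (v i) = K.starProjection (b i)) :
    (finrank 𝕜 K : ℝ) ≤ ∑ i, ‖v i‖ := by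
  rw [← K.sum_norm_sq_starProjection_eq_finrank b]
  gcongr with i
  calc ‖K.starProjection (b i)‖ ^ 2
      = ‖K.starProjection (b i)‖ * ‖K.starProjection (v i)‖ := by rw [hv, sq]
    _ ≤ 1 * ‖v i‖ := by
      gcongr
      · exact (K.norm_starProjection_apply_le _).trans (b.orthonormal.1 i).le
      · exact K.norm_starProjection_apply_le _
    _ = ‖v i‖ := one_mul _

end Submodule

namespace Matrix

variable {𝕜 m n : Type*} [RCLike 𝕜] [Fintype m] [Fintype n] [DecidableEq n]

theorem finrank_range_toEuclideanLin (A : Matrix m n 𝕜) :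
    finrank 𝕜 (LinearMap.range A.toEuclideanLin) = A.rank :=
  (A.rank_eq_finrank_range_toLin (PiLp.basisFun 2 𝕜 m) (PiLp.basisFun 2 𝕜 n)).symm

theorem norm_toEuclideanLin_eigenvectorBasis_conjTranspose_mul_self (C : Matrix n n 𝕜) (i : n) :
    ‖C.toEuclideanLin ((isHermitian_conjTranspose_mul_self C).eigenvectorBasis i)‖ =
      √((isHermitian_conjTranspose_mul_self C).eigenvalues i) := by
  rw [← Real.sqrt_sq (norm_nonneg _), @norm_sq_eq_re_inner 𝕜, IsHermitian.eigenvalues_eq,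
    EuclideanSpace.inner_eq_star_dotProduct, ofLp_toLpLin, toLin'_apply, star_mulVec,
    dotProduct_comm, ← dotProduct_mulVec, mulVec_mulVec]

theorem starProjection_range_conjTranspose_toEuclideanLin_apply_of_mul_eq [DecidableEq m]
    {Z : Matrix m n 𝕜} {C : Matrix n n 𝕜} (h : Z * C = Z) (x : EuclideanSpace 𝕜 n) :
    (LinearMap.range Zᴴ.toEuclideanLin).starProjection (C.toEuclideanLin x) =
      (LinearMap.range Zᴴ.toEuclideanLin).starProjection x := by
  rw [← sub_eq_zero, ← map_sub, Submodule.starProjection_apply_eq_zero_iff,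
    LinearMap.orthogonal_range, ← toEuclideanLin_conjTranspose_eq_adjoint,
    conjTranspose_conjTranspose, LinearMap.mem_ker, map_sub, ← LinearMap.comp_apply,
    ← toLpLin_mul_same, h, sub_self]

end Matrix

/-- If `Z = Z C`, then the nuclear norm of `C` is at least `rank Z`. -/
theorem nuclearNorm_ge_rank_of_self_representation
    (m n : ℕ)
    (Z : Matrix (Fin m) (Fin n) ℝ) (C : Matrix (Fin n) (Fin n) ℝ)
    (h : Z = Z * C) :
    (Z.rank : ℝ) ≤ nuclearNorm C := by
  have hbound := (LinearMap.range Zᴴ.toEuclideanLin).finrank_le_sum_norm_of_starProjection_eq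
    (isHermitian_conjTranspose_mul_self C).eigenvectorBasis
    fun i => starProjection_range_conjTranspose_toEuclideanLin_apply_of_mul_eq h.symm _
  rw [finrank_range_toEuclideanLin, rank_conjTranspose] at hbound
  simpa only [norm_toEuclideanLin_eigenvectorBasis_conjTranspose_mul_self, nuclearNorm] using
    hbound
end

section
/- Let V be an n×r real matrix with orthonormal columns (VᵀV = I_r), and suppose the index set {1,…,n} is partitioned into groups such that the row space of Z = UΛVᵀ decomposes as a direct sum of independent subspaces, one spanned by the columns of Z in each group. If columns α and β of Z belong to groups lying in different independent subspaces, then (VVᵀ)_{αβ} = 0. -/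
/-!
Let `Q = V Vᵀ`, the orthogonal projection onto the row space of `Z`, and let `T` be the diagonal
0/1 mask of the group `k = g β`. Independence gives a projection `P` of `ℝᵐ` onto `S k` killing
every other `S l`, so `P Z = Z T`: the row space of `Z`, which is the column space of `V`, is
`T`-invariant. A symmetric matrix leaving the column space of `V` invariant commutes with `Q`,
so `T Q = Q T`, and the `(α, β)` entries of the two sides are `0` and `Q α β`.
-/

open Matrix

theorem iSupIndep.exists_linearMap_eq_self_and_eq_zero {ι K E : Type*} [DivisionRing K]
    [AddCommGroup E] [Module K E] {S : ι → Submodule K E} (hS : iSupIndep S) (k : ι) :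
    ∃ p : E →ₗ[K] E, (∀ x ∈ S k, p x = x) ∧ ∀ l ≠ k, ∀ x ∈ S l, p x = 0 := by
  obtain ⟨C, hC, hcompl⟩ := (hS k).symm.exists_isCompl
  refine ⟨(S k).projection C hcompl.symm, fun x hx => Submodule.projection_apply_of_mem_left _ hx,
    fun l hl x hx => Submodule.projection_apply_of_mem_right _ (hC ?_)⟩
  exact le_iSup₂ (f := fun l (_ : l ≠ k) => S l) l hl hx

theorem exists_mul_eq_mul_diagonal_of_iSupIndep {K m ι κ : Type*} [Field K] [Fintype m]
    [DecidableEq m] [Fintype ι] [DecidableEq ι] [DecidableEq κ]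
    {Z : Matrix m ι K} {g : ι → κ} {S : κ → Submodule K (m → K)} (hS : iSupIndep S)
    (hZ : ∀ j, Zᵀ j ∈ S (g j)) (k : κ) :
    ∃ P : Matrix m m K, P * Z = Z * diagonal fun j => if g j = k then (1 : K) else 0 := by
  obtain ⟨p, hpk, hpl⟩ := hS.exists_linearMap_eq_self_and_eq_zero k
  refine ⟨LinearMap.toMatrix' p, ?_⟩
  ext i j
  have hPZ : (LinearMap.toMatrix' p * Z) i j = p (Zᵀ j) i := by
    rw [← LinearMap.toMatrix'_mulVec]; rfl
  rw [hPZ, mul_diagonal]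
  split_ifs with h
  · rw [hpk _ (h ▸ hZ j), mul_one]; rfl
  · rw [hpl _ h _ (hZ j), mul_zero]; rfl

theorem Matrix.commute_mul_transpose_of_mul_eq_mul {R m n : Type*} [CommRing R] [Fintype m]
    [Fintype n] [DecidableEq n] {V : Matrix m n R} {T : Matrix m m R} {M : Matrix n n R}
    (hV : Vᵀ * V = 1) (hT : Tᵀ = T) (hTV : T * V = V * M) : Commute T (V * Vᵀ) := by
  have h : T * (V * Vᵀ) = V * Vᵀ * T * (V * Vᵀ) := by
    calc T * (V * Vᵀ) = V * (Vᵀ * V) * M * Vᵀ := by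
          rw [hV, Matrix.mul_one, ← hTV, Matrix.mul_assoc]
      _ = V * Vᵀ * T * (V * Vᵀ) := by
        rw [Matrix.mul_assoc (V * Vᵀ) T, ← Matrix.mul_assoc T, hTV]; simp only [Matrix.mul_assoc]
  -- both sides of the commutation are transposes of the symmetric matrix `(V Vᵀ) T (V Vᵀ)`
  have h' := congrArg transpose h
  simp only [transpose_mul, transpose_transpose, hT] at h'
  show T * (V * Vᵀ) = V * Vᵀ * T
  simp only [Matrix.mul_assoc] at h h' ⊢
  exact h.trans h'.symm

/-- Subspace Separation Theorem: Suppose `Z = U Λ Vᵀ` is a skinny SVD and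
the columns of `Z` are grouped by `g` so that the subspaces spanned by the columns of each
group are independent (their sum is direct). If columns `α` and `β` belong to different
groups, then `(V Vᵀ)_{αβ} = 0`. -/
theorem subspace_separation
    (m n r K : ℕ)
    (Z : Matrix (Fin m) (Fin n) ℝ)
    (U : Matrix (Fin m) (Fin r) ℝ)
    (Λ : Matrix (Fin r) (Fin r) ℝ) (d : Fin r → ℝ)
    (V : Matrix (Fin n) (Fin r) ℝ)
    (hΛ : Λ = Matrix.diagonal d) (hd : ∀ i, d i ≠ 0)
    (hU : Uᵀ * U = 1) (hV : Vᵀ * V = 1)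
    (hZ : Z = U * Λ * Vᵀ)
    (g : Fin n → Fin K)
    (S : Fin K → Submodule ℝ (Fin m → ℝ))
    (hspan : ∀ k, S k = Submodule.span ℝ ((fun j => fun i => Z i j) '' {j | g j = k}))
    (hindep : iSupIndep S)
    (α β : Fin n) (hdiff : g α ≠ g β) :
    (V * Vᵀ) α β = 0 := by
  set T : Matrix (Fin n) (Fin n) ℝ := diagonal fun j => if g j = g β then 1 else 0
  have hcol (j : Fin n) : Zᵀ j ∈ S (g j) := hspan (g j) ▸ Submodule.subset_span ⟨j, rfl, rfl⟩
  obtain ⟨P, hP⟩ := exists_mul_eq_mul_diagonal_of_iSupIndep hindep hcol (g β)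
  have hZt : Zᵀ = V * (diagonal d * Uᵀ) := by
    rw [hZ, hΛ, transpose_mul, transpose_mul, diagonal_transpose, transpose_transpose]
  have hD : diagonal d * diagonal d⁻¹ = 1 := by
    rw [diagonal_mul_diagonal, ← diagonal_one]
    exact congrArg diagonal (funext fun i => mul_inv_cancel₀ (hd i))
  have hVZ : V = Zᵀ * (U * diagonal d⁻¹) := by
    rw [hZt, Matrix.mul_assoc, Matrix.mul_assoc, ← Matrix.mul_assoc Uᵀ, hU, Matrix.one_mul, hD,
      Matrix.mul_one]
  have hTZ : T * Zᵀ = Zᵀ * Pᵀ := by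
    simpa [T, transpose_mul] using (congrArg transpose hP).symm
  have hTV : T * V = V * (diagonal d * Uᵀ * Pᵀ * (U * diagonal d⁻¹)) := by
    conv_lhs => rw [hVZ, ← Matrix.mul_assoc, hTZ, hZt]
    simp only [Matrix.mul_assoc]
  have hQ := congrFun (congrFun
    (commute_mul_transpose_of_mul_eq_mul hV (diagonal_transpose _) hTV).eq α) β
  simpa [T, diagonal_mul, mul_diagonal, hdiff] using hQ.symm
end
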